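/- For m = 2a + b and n = a + 2b with a, b nonnegative integers, the set S = {(01)^a 0^b, (01)^a 1^b} of m-bit strings is an ((n+m)/3)-LCS cover for strings of length n; i.e., for every x in {0,1}^n, max_{s in S} |LCS(s,x)| >= a + b. -/

import Mathlib

/-!
Split `x` into its first `a` letters and the remaining `2b`. Any string of length `a` embeds
into `(01)^a`, and among the last `2b` letters one symbol `c` occurs at least `b` times, so
`x.take a ++ c^b` is a common subsequence of `x` and `(01)^a c^b`, of length `a + b`.
-/

/-- Length of a longest common subsequence of two binary strings. -/
noncomputable def lcsLen (x y : List Bool) : ℕ :=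
  sSup {n | ∃ s : List Bool, s.length = n ∧ s.Sublist x ∧ s.Sublist y}

lemma length_le_lcsLen {x y s : List Bool} (hx : s.Sublist x) (hy : s.Sublist y) :
    s.length ≤ lcsLen x y :=
  le_csSup ⟨x.length, fun _ ⟨_, ht, htx, _⟩ => ht ▸ htx.length_le⟩ ⟨s, rfl, hx, hy⟩

lemma List.sublist_flatten_replicate {α : Type*} {w l : List α} {a : ℕ}
    (hw : w.length ≤ a) (hwl : ∀ c ∈ w, c ∈ l) : w.Sublist (replicate a l).flatten := by
  induction a generalizing w with
  | zero => simp_all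
  | succ a ih =>
    cases w with
    | nil => exact nil_sublist _
    | cons c w =>
      rw [replicate_succ, flatten_cons, ← singleton_append]
      exact (singleton_sublist.mpr (hwl c mem_cons_self)).append
        (ih (by simpa using hw) fun d hd => hwl d (mem_cons_of_mem c hd))

lemma le_lcsLen_alternating_append_replicate {a b : ℕ} {c : Bool} {x : List Bool}
    (ha : a ≤ x.length) (hb : b ≤ (x.drop a).count c) :
    a + b ≤ lcsLen ((List.replicate a [false, true]).flatten ++ List.replicate b c) x := by
  have htake : (x.take a).length = a := List.length_take_of_le ha
  have hs : (x.take a ++ List.replicate b c).Sublist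
      ((List.replicate a [false, true]).flatten ++ List.replicate b c) :=
    (List.sublist_flatten_replicate htake.le fun d _ => by cases d <;> simp).append
      (List.Sublist.refl _)
  have hx : (x.take a ++ List.replicate b c).Sublist x := by
    conv_rhs => rw [← List.take_append_drop a x]
    exact (List.Sublist.refl _).append (List.replicate_sublist_iff.mpr hb)
  simpa [htake] using length_le_lcsLen hs hx

theorem stmt1 (a b : ℕ) (x : List Bool) (hx : x.length = a + 2 * b) :
    a + b ≤
      max (lcsLen ((List.replicate a [false, true]).flatten ++ List.replicate b false) x)
          (lcsLen ((List.replicate a [false, true]).flatten ++ List.replicate b true) x) := by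
  have hcount := List.count_false_add_count_true (x.drop a)
  rw [List.length_drop, hx] at hcount
  rcases le_or_gt b ((x.drop a).count false) with hfalse | htrue
  · exact le_max_of_le_left (le_lcsLen_alternating_append_replicate (by omega) hfalse)
  · exact le_max_of_le_right (le_lcsLen_alternating_append_replicate (by omega) (by omega))
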